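/- arXiv:2209.08021 — 4 statements merged into one kernel-verified Lean document; each statement's English description precedes it below -/
import Mathlib

section
/- Let M be an n×n integer matrix. If the rank of M modulo p (i.e. the rank of its reduction in M_n(𝔽_p)) equals k, then p^(n-k) divides det M. -/
/-!
Extend a basis of the kernel of `M mod p` to a basis of `𝔽_p^n` and lift the resulting change of
basis to an integer matrix `B`. Then `p ∤ det B`, while `n - k` columns of `M * B` vanish mod `p`,
so `p ^ (n - k)` divides `det (M * B) = det M * det B`, hence `det M`.
-/

open Module Finset

theorem Module.Basis.sumExtend_inl {K V ι : Type*} [DivisionRing K] [AddCommGroup V] [Module K V]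
    {v : ι → V} (hv : LinearIndependent K v) (i : ι) : Basis.sumExtend hv (Sum.inl i) = v i := by
  simp only [Basis.sumExtend, Basis.reindex_apply, Basis.coe_extend]
  rfl

namespace Matrix

variable {ι : Type*} [Fintype ι]

theorem finrank_ker_mulVecLin {m K : Type*} [Fintype m] [Field K] (A : Matrix m ι K) :
    finrank K (LinearMap.ker A.mulVecLin) = Fintype.card ι - A.rank := by
  have h := LinearMap.finrank_range_add_finrank_ker A.mulVecLin
  rw [Module.finrank_fintype_fun_eq_card] at h
  rw [rank]
  omega

variable [DecidableEq ι]

theorem pow_card_dvd_det_of_dvd_cols {R : Type*} [CommRing R] (a : R) (M : Matrix ι ι R)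
    (s : Finset ι) (hs : ∀ i, ∀ j ∈ s, a ∣ M i j) : a ^ #s ∣ M.det := by
  let d : ι → R := fun j => if j ∈ s then a else 1
  have hdvd : ∀ i j, d j ∣ M i j := fun i j => by
    by_cases hj : j ∈ s
    · simpa [d, hj] using hs i j hj
    · simp [d, hj]
  choose N hN using hdvd
  have hM : M = of N * diagonal d := by
    ext i j
    rw [mul_diagonal, of_apply, hN, mul_comm]
  rw [hM, det_mul, det_diagonal, Fintype.prod_ite_mem, prod_const]
  exact dvd_mul_left _ _

theorem exists_isUnit_det_and_mul_cols_eq_zero {K : Type*} [Field K] (A : Matrix ι ι K) :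
    ∃ B : Matrix ι ι K, IsUnit B.det ∧ ∃ s : Finset ι,
      #s = Fintype.card ι - A.rank ∧ ∀ i, ∀ j ∈ s, (A * B) i j = 0 := by
  set N := LinearMap.ker A.mulVecLin
  let v := Module.finBasis K N
  have hv : LinearIndependent K (N.subtype ∘ v) :=
    v.linearIndependent.map' N.subtype N.ker_subtype
  let e := (Basis.sumExtend hv).indexEquiv (Pi.basisFun K ι)
  let b := (Basis.sumExtend hv).reindex e
  let B := (Pi.basisFun K ι).toMatrix b
  have := (Pi.basisFun K ι).invertibleToMatrix b
  refine ⟨B, isUnit_det_of_invertible B,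
    univ.map (Function.Embedding.inl.trans e.toEmbedding), ?_, ?_⟩
  · rw [card_map, card_univ, Fintype.card_fin, finrank_ker_mulVecLin]
  · intro i j hj
    obtain ⟨m, -, rfl⟩ := mem_map.mp hj
    have hker : A *ᵥ b (e (Sum.inl m)) = 0 := by
      rw [Basis.reindex_apply, e.symm_apply_apply, Basis.sumExtend_inl]
      exact (v m).2
    calc (A * B) i (e (Sum.inl m)) = (A *ᵥ b (e (Sum.inl m))) i := by
          simp only [B, mul_apply, mulVec, dotProduct, Basis.toMatrix_apply, Pi.basisFun_repr]
      _ = 0 := congrFun hker i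

theorem exists_isUnit_map_det_and_map_mul_cols_eq_zero {R K : Type*} [CommRing R] [Field K]
    (f : R →+* K) (hf : Function.Surjective f) (M : Matrix ι ι R) :
    ∃ B : Matrix ι ι R, IsUnit (f B.det) ∧ ∃ s : Finset ι,
      #s = Fintype.card ι - (M.map f).rank ∧ ∀ i, ∀ j ∈ s, f ((M * B) i j) = 0 := by
  obtain ⟨B₀, hB₀, s, hs, hcols⟩ := exists_isUnit_det_and_mul_cols_eq_zero (M.map f)
  have hB : (B₀.map (Function.surjInv hf)).map f = B₀ := by
    ext i j
    exact Function.surjInv_eq hf _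
  refine ⟨B₀.map (Function.surjInv hf), ?_, s, hs, fun i j hj => ?_⟩
  · rwa [f.map_det, RingHom.mapMatrix_apply, hB]
  · rw [← map_apply (f := f), Matrix.map_mul, hB]
    exact hcols i j hj

end Matrix

theorem stmt_1 (p n k : ℕ) [Fact p.Prime] (M : Matrix (Fin n) (Fin n) ℤ)
    (hk : (M.map (Int.cast : ℤ → ZMod p)).rank = k) :
    (p : ℤ) ^ (n - k) ∣ M.det := by
  obtain ⟨B, hB, s, hs, hcols⟩ := Matrix.exists_isUnit_map_det_and_map_mul_cols_eq_zero
    (Int.castRingHom (ZMod p)) ZMod.intCast_surjective M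
  simp only [eq_intCast, ZMod.intCast_zmod_eq_zero_iff_dvd, isUnit_iff_ne_zero, ne_eq] at hB hcols
  have hdvd : (p : ℤ) ^ (n - k) ∣ M.det * B.det := by
    rw [Fintype.card_fin, Int.coe_castRingHom, hk] at hs
    rw [← Matrix.det_mul, ← hs]
    exact Matrix.pow_card_dvd_det_of_dvd_cols _ _ s hcols
  have hp : Prime (p : ℤ) := Nat.prime_iff_prime_int.mp Fact.out
  exact ((hp.coprime_iff_not_dvd.mpr hB).pow_left).dvd_of_dvd_mul_right hdvd
end

section
/- Let p ≠ 2 be a prime, V = 𝔽_p^m, Q a quadratic form on V with associated bilinear form B(x,y) = Q(x+y) - Q(x) - Q(y), and L a linear form on V. If there is no y ∈ V with L(x) = B(x,y) for all x, then the exponential sum G(F) = Σ_{x ∈ V} e^{2πi F(x)/p} equals 0, where F = Q + L. -/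
open QuadraticMap Finset LinearMap

lemma stmt_2_exists_rad (p m : ℕ) [Fact p.Prime]
    (Q : QuadraticForm (ZMod p) (Fin m → ZMod p))
    (L : (Fin m → ZMod p) →ₗ[ZMod p] ZMod p)
    (hL : ¬ ∃ y : Fin m → ZMod p, ∀ x, L x = polar Q x y) :
    ∃ z : Fin m → ZMod p, (∀ x, polar Q x z = 0) ∧ L z ≠ 0 := by
  by_contra h
  push_neg at h
  apply hL
  set φ : (Fin m → ZMod p) → ((Fin m → ZMod p) →ₗ[ZMod p] ZMod p) :=
    fun y => Q.polarBilin.flip y with hφ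
  have hker : ⨅ y, ker (φ y) ≤ ker L := by
    intro z hz
    simp only [Submodule.mem_iInf, mem_ker] at hz ⊢
    apply h z
    intro x
    have := hz x
    simpa [hφ, polar_comm] using this
  have hmem := mem_span_of_iInf_ker_le_ker hker
  have : L ∈ LinearMap.range (Q.polarBilin.flip) := by
    have : Set.range φ = Set.range Q.polarBilin.flip := rfl
    rw [this, ← LinearMap.coe_range, Submodule.span_eq] at hmem
    exact hmem
  obtain ⟨y, hy⟩ := this
  exact ⟨y, fun x => by rw [← hy]; rfl⟩

theorem stmt_2 (p m : ℕ) [Fact p.Prime] (hp2 : p ≠ 2)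
    (Q : QuadraticForm (ZMod p) (Fin m → ZMod p))
    (L : (Fin m → ZMod p) →ₗ[ZMod p] ZMod p)
    (hL : ¬ ∃ y : Fin m → ZMod p, ∀ x, L x = Q (x + y) - Q x - Q y) :
    ∑ x : Fin m → ZMod p,
      Complex.exp (2 * Real.pi * Complex.I * ((Q x + L x).val : ℂ) / p) = 0 := by
  haveI : NeZero p := ⟨(Fact.out : p.Prime).ne_zero⟩
  obtain ⟨z, hrad, hLz⟩ := stmt_2_exists_rad p m Q L hL
  -- Q z = 0
  have h2 : (2 : ZMod p) ≠ 0 := by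
    intro h
    have := (ZMod.natCast_eq_zero_iff 2 p).mp (by exact_mod_cast h)
    exact hp2 ((Nat.prime_dvd_prime_iff_eq (Fact.out : p.Prime) Nat.prime_two).mp this)
  have hQz : Q z = 0 := by
    have h0 := hrad z
    rw [polar_self, two_smul] at h0
    have h1 : (2 : ZMod p) * Q z = 0 := by rw [two_mul]; exact h0
    rcases mul_eq_zero.mp h1 with h | h
    · exact absurd h h2
    · exact h
  -- rewrite summand via the additive character
  have hrw : ∀ a : ZMod p,
      Complex.exp (2 * Real.pi * Complex.I * (a.val : ℂ) / p) = ZMod.stdAddChar a := by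
    intro a
    rw [ZMod.stdAddChar_apply, ZMod.toCircle_apply]
  simp only [hrw]
  set S := ∑ x : Fin m → ZMod p, (ZMod.stdAddChar (Q x + L x) : ℂ) with hS
  have key : S = ZMod.stdAddChar (L z) * S := by
    have hterm : ∀ x, (ZMod.stdAddChar (Q (x + z) + L (x + z)) : ℂ)
        = ZMod.stdAddChar (L z) * ZMod.stdAddChar (Q x + L x) := by
      intro x
      have hq : Q (x + z) = Q x := by
        have hd : Q (x + z) - Q x - Q z = polar Q x z := rfl
        have hpol := hrad x
        rw [← hd, hQz] at hpol
        linear_combination hpol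
      have hl : L (x + z) = L x + L z := by simp [map_add]
      rw [hq, hl]
      have h3 : Q x + (L x + L z) = L z + (Q x + L x) := by ring
      rw [h3, AddChar.map_add_eq_mul]
    calc S = ∑ x : Fin m → ZMod p, (ZMod.stdAddChar (Q (x + z) + L (x + z)) : ℂ) :=
        (Fintype.sum_equiv (Equiv.addRight z)
          (fun x => (ZMod.stdAddChar (Q (x + z) + L (x + z)) : ℂ))
          (fun x => (ZMod.stdAddChar (Q x + L x) : ℂ)) (fun x => rfl)).symm
      _ = ∑ x : Fin m → ZMod p, ZMod.stdAddChar (L z) * ZMod.stdAddChar (Q x + L x) :=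
        Finset.sum_congr rfl (fun x _ => hterm x)
      _ = ZMod.stdAddChar (L z) * S := by rw [← Finset.mul_sum]
  have hne : (ZMod.stdAddChar (L z) : ℂ) ≠ 1 := by
    intro hh
    apply hLz
    have h1 : ZMod.toCircle (L z) = ZMod.toCircle (0 : ZMod p) := by
      ext1
      rw [← ZMod.stdAddChar_apply, hh]
      simp
    exact ZMod.injective_toCircle h1
  have := key
  have : S * (ZMod.stdAddChar (L z) - 1) = 0 := by
    rw [mul_sub, mul_one]
    rw [mul_comm] at key
    rw [← key]
    ring
  rcases mul_eq_zero.mp this with h | h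
  · exact h
  · exact absurd (by linear_combination h) hne
end

section
/- Let p be an odd prime, k = 2l with l ≥ 1, and A, B ∈ M_n(ℤ/p^kℤ). Then the matrix Kloosterman sum K_n(A,B,p^k) = Σ_{X ∈ GL_n(ℤ/p^kℤ)} e^{2πi Tr(AX + X⁻¹B)/p^k} equals Σ_X e^{2πi Tr(AX + X⁻¹B)/p^k}, where the latter sum ranges only over X ∈ GL_n(ℤ/p^kℤ) with XAX ≡ B (mod p^l). -/
/-!
If `ε * ε = 0` in a finite commutative ring `R`, then `1 + ε • U` is invertible with inverse
`1 - ε • U`, and right-multiplying `X` by it shifts the phase `tr (A X + X⁻¹ B)` by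
`tr (U * ε • (A X - X⁻¹ B))`. Right multiplication permutes `GL n R`, so the Kloosterman
sum equals its average over all `U`; orthogonality of the trace pairing for a primitive
additive character then kills every `X` with `ε • (A X - X⁻¹ B) ≠ 0`. For `R = ℤ/p^(2l)` and
`ε = p^l` that condition reads `A X ≡ X⁻¹ B`, i.e. `X A X ≡ B (mod p^l)`.
-/

open Matrix Finset

def Units.oneAddOfMulSelfEqZero {M : Type*} [Ring M] {a : M} (ha : a * a = 0) : Mˣ where
  val := 1 + a
  inv := 1 - a
  val_inv := by simp [mul_sub, add_mul, ha]
  inv_val := by simp [sub_mul, mul_add, ha]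

theorem Units.mul_sub_inv_mul_eq_zero_iff {M : Type*} [Ring M] (u : Mˣ) (a b : M) :
    a * u - ↑u⁻¹ * b = 0 ↔ u * a * u = b := by
  rw [sub_eq_zero, Units.eq_inv_mul_iff_mul_eq, mul_assoc]

theorem Fintype.card_nsmul_sum_eq_sum_sum_mul {G M ι : Type*} [Group G] [Fintype G]
    [AddCommMonoid M] [Fintype ι] (f : G → M) (g : ι → G) :
    Fintype.card ι • ∑ x, f x = ∑ x, ∑ i, f (x * g i) := by
  rw [Finset.sum_comm, ← Finset.card_univ, ← Finset.sum_const]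
  exact Finset.sum_congr rfl fun i _ =>
    (Fintype.sum_equiv (Equiv.mulRight (g i)) _ _ fun _ => rfl).symm

theorem ZMod.cexp_val_div_eq_stdAddChar {N : ℕ} [NeZero N] (j : ZMod N) :
    Complex.exp (2 * Real.pi * Complex.I * (j.val : ℂ) / (N : ℂ)) = ZMod.stdAddChar j := by
  rw [ZMod.stdAddChar_apply, ZMod.toCircle_apply]

theorem ZMod.natCast_mul_eq_zero_iff {q m N : ℕ} [NeZero N] (hN : N = q * m) (hm : m ∣ N)
    (x : ZMod N) : (q : ZMod N) * x = 0 ↔ ZMod.castHom hm (ZMod m) x = 0 := by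
  subst hN
  have hq : q ≠ 0 := left_ne_zero_of_mul (NeZero.ne (q * m))
  rw [← ZMod.natCast_zmod_val x, ← Nat.cast_mul, ZMod.natCast_eq_zero_iff, map_natCast,
    ZMod.natCast_eq_zero_iff, Nat.mul_dvd_mul_iff_left (Nat.pos_of_ne_zero hq)]

theorem Matrix.natCast_smul_eq_zero_iff_map_castHom_eq_zero {n : Type*} {q m N : ℕ} [NeZero N]
    (hN : N = q * m) (hm : m ∣ N) (C : Matrix n n (ZMod N)) :
    (q : ZMod N) • C = 0 ↔ C.map (ZMod.castHom hm (ZMod m)) = 0 := by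
  simp only [← Matrix.ext_iff, smul_apply, smul_eq_mul, map_apply, zero_apply,
    ZMod.natCast_mul_eq_zero_iff hN hm]

namespace Matrix

variable {n R : Type*} [Fintype n] [DecidableEq n] [CommRing R]

theorem trace_mul_mul_one_add_add_one_sub_mul_mul (A B X Y W : Matrix n n R) :
    trace (A * (X * (1 + W)) + (1 - W) * Y * B) =
      trace (A * X + Y * B) + trace (W * (A * X - Y * B)) := by
  have expand : A * (X * (1 + W)) + (1 - W) * Y * B =
      (A * X + Y * B) + (A * X * W - W * (Y * B)) := by noncomm_ring
  rw [expand, trace_add, trace_sub, trace_mul_comm (A * X) W, ← trace_sub, ← mul_sub]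

theorem map_mul_sub_inv_mul_eq_zero_iff {S : Type*} [CommRing S] (f : R →+* S) (X : GL n R)
    (A B : Matrix n n R) :
    (A * X.val - X⁻¹.val * B).map f = 0 ↔ (X.val * A * X.val).map f = B.map f := by
  have := (Units.map f.mapMatrix.toMonoidHom X).mul_sub_inv_mul_eq_zero_iff (A.map f) (B.map f)
  rwa [← map_inv, Units.coe_map, Units.coe_map, RingHom.toMonoidHom_eq_coe, MonoidHom.coe_coe,
    RingHom.mapMatrix_apply, RingHom.mapMatrix_apply, ← Matrix.map_mul, ← Matrix.map_mul,
    ← Matrix.map_mul, ← Matrix.map_mul, ← Matrix.map_sub _ (map_sub f)] at this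

def oneAddSmulUnit {ε : R} (hε : ε * ε = 0) (U : Matrix n n R) : GL n R :=
  Units.oneAddOfMulSelfEqZero (a := ε • U) (by rw [smul_mul_smul_comm, hε, zero_smul])

theorem coe_oneAddSmulUnit {ε : R} (hε : ε * ε = 0) (U : Matrix n n R) :
    (oneAddSmulUnit hε U : Matrix n n R) = 1 + ε • U := rfl

theorem coe_oneAddSmulUnit_inv {ε : R} (hε : ε * ε = 0) (U : Matrix n n R) :
    ((oneAddSmulUnit hε U)⁻¹ : GL n R) = (1 - ε • U : Matrix n n R) := rfl

theorem trace_mul_oneAddSmulUnit_add {ε : R} (hε : ε * ε = 0) (U A B : Matrix n n R)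
    (X : GL n R) :
    trace (A * (X * oneAddSmulUnit hε U).val + (X * oneAddSmulUnit hε U)⁻¹.val * B) =
      trace (A * X.val + X⁻¹.val * B) + trace (U * ε • (A * X.val - X⁻¹.val * B)) := by
  rw [_root_.mul_inv_rev, Units.val_mul, Units.val_mul, coe_oneAddSmulUnit,
    coe_oneAddSmulUnit_inv, trace_mul_mul_one_add_add_one_sub_mul_mul, smul_mul_assoc,
    mul_smul_comm]

end Matrix

namespace AddChar

variable {R : Type*} [CommRing R] [Fintype R] [DecidableEq R] {ψ : AddChar R ℂ}
  {n : Type*} [Fintype n] [DecidableEq n]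

theorem sum_trace_mul_eq_ite (hψ : ψ.IsPrimitive) (C : Matrix n n R) :
    ∑ U : Matrix n n R, ψ (trace (U * C)) =
      if C = 0 then (Fintype.card (Matrix n n R) : ℂ) else 0 := by
  let Φ : AddChar (Matrix n n R) ℂ :=
    ψ.compAddMonoidHom ((traceAddMonoidHom n R).comp (AddMonoidHom.mulRight C))
  have hΦ : Φ = 0 ↔ C = 0 := by
    refine ⟨fun h => ?_, fun h => by ext U; simp [Φ, h]⟩
    ext i j
    by_contra hC
    obtain ⟨u, hu⟩ := AddChar.ne_one_iff.mp (hψ hC)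
    apply hu
    simpa [Φ, trace_single_mul, mul_comm] using DFunLike.congr_fun h (single j i u)
  classical
  change ∑ U, Φ U = _
  rw [Φ.sum_eq_ite]
  exact if_congr hΦ rfl rfl

theorem sum_trace_mul_oneAddSmulUnit_add (hψ : ψ.IsPrimitive) {ε : R} (hε : ε * ε = 0)
    (A B : Matrix n n R) (X : GL n R) :
    ∑ U : Matrix n n R,
        ψ (trace (A * (X * oneAddSmulUnit hε U).val + (X * oneAddSmulUnit hε U)⁻¹.val * B)) =
      ψ (trace (A * X.val + X⁻¹.val * B)) *
        if ε • (A * X.val - X⁻¹.val * B) = 0 then (Fintype.card (Matrix n n R) : ℂ)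
        else 0 := by
  simp only [trace_mul_oneAddSmulUnit_add, map_add_eq_mul, ← mul_sum, sum_trace_mul_eq_ite hψ]

theorem sum_trace_mul_add_inv_mul_eq_sum_filter (hψ : ψ.IsPrimitive) {ε : R}
    (hε : ε * ε = 0) (A B : Matrix n n R) :
    ∑ X : GL n R, ψ (trace (A * X.val + X⁻¹.val * B)) =
      ∑ X ∈ univ.filter (fun X : GL n R => ε • (A * X.val - X⁻¹.val * B) = 0),
        ψ (trace (A * X.val + X⁻¹.val * B)) := by
  have hcard : (Fintype.card (Matrix n n R) : ℂ) ≠ 0 :=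
    Nat.cast_ne_zero.mpr Fintype.card_ne_zero
  apply mul_left_cancel₀ hcard
  rw [← nsmul_eq_mul, Fintype.card_nsmul_sum_eq_sum_sum_mul _ (oneAddSmulUnit hε), sum_filter,
    mul_sum]
  simp only [sum_trace_mul_oneAddSmulUnit_add hψ hε, mul_comm, ite_mul, zero_mul, mul_ite,
    mul_zero]

end AddChar

theorem stmt_15 (p n l : ℕ) [NeZero (p ^ (2 * l))]
    (A B : Matrix (Fin n) (Fin n) (ZMod (p ^ (2 * l)))) :
    ∑ X : GL (Fin n) (ZMod (p ^ (2 * l))),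
      Complex.exp (2 * Real.pi * Complex.I *
        ((Matrix.trace (A * (X : Matrix (Fin n) (Fin n) (ZMod (p ^ (2 * l)))) +
          ((X⁻¹ : GL (Fin n) (ZMod (p ^ (2 * l)))) : Matrix (Fin n) (Fin n) (ZMod (p ^ (2 * l)))) * B)).val : ℂ)
          / (p ^ (2 * l) : ℂ))
    = ∑ X ∈ Finset.univ.filter (fun X : GL (Fin n) (ZMod (p ^ (2 * l))) =>
        ((X : Matrix (Fin n) (Fin n) (ZMod (p ^ (2 * l)))) * A *
          (X : Matrix (Fin n) (Fin n) (ZMod (p ^ (2 * l))))).map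
            (ZMod.castHom (pow_dvd_pow p (by omega : l ≤ 2 * l)) (ZMod (p ^ l)))
        = B.map (ZMod.castHom (pow_dvd_pow p (by omega : l ≤ 2 * l)) (ZMod (p ^ l)))),
      Complex.exp (2 * Real.pi * Complex.I *
        ((Matrix.trace (A * (X : Matrix (Fin n) (Fin n) (ZMod (p ^ (2 * l)))) +
          ((X⁻¹ : GL (Fin n) (ZMod (p ^ (2 * l)))) : Matrix (Fin n) (Fin n) (ZMod (p ^ (2 * l)))) * B)).val : ℂ)
          / (p ^ (2 * l) : ℂ)) := by
  have hN : p ^ (2 * l) = p ^ l * p ^ l := by rw [← pow_add, two_mul]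
  have hε : ((p ^ l : ℕ) : ZMod (p ^ (2 * l))) * (p ^ l : ℕ) = 0 := by
    rw [← Nat.cast_mul, ← hN, ZMod.natCast_self]
  simp only [← Nat.cast_pow, ZMod.cexp_val_div_eq_stdAddChar]
  rw [AddChar.sum_trace_mul_add_inv_mul_eq_sum_filter (ZMod.isPrimitive_stdAddChar _) hε]
  refine Finset.sum_congr (Finset.filter_congr fun X _ => ?_) fun _ _ => rfl
  rw [Matrix.natCast_smul_eq_zero_iff_map_castHom_eq_zero hN,
    Matrix.map_mul_sub_inv_mul_eq_zero_iff]
end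

section
/- Let p ≠ 2 be a prime, T ∈ M_n(𝔽_p), and consider the quadratic form Q(U) = Tr(TU²) on M_n(𝔽_p). Then the dimension of the radical of the associated bilinear form B(U,Y) = Tr(T(UY + YU)) equals dim{Y ∈ M_n(𝔽_p) : TY + YT = 0}, and consequently for any S ∈ M_n(𝔽_p), |Σ_{U ∈ M_n(𝔽_p)} e^{2πi Tr(SU + TU²)/p}| ≤ p^{n²} · p^{-(n² - K)/2} where K = dim{Y : TY + YT = 0}. -/
/-!
Weyl differencing: for `f U = Tr (S U + T U²)` one has
`f (V + Y) = f V + f Y + Tr ((T Y + Y T) V)`, so for the standard additive character `ψ` of `𝔽_p`,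
`|Σ_U ψ (f U)|² = Σ_Y ψ (f Y) Σ_V ψ (Tr ((T Y + Y T) V))`. By orthogonality of characters the
inner sum is `p^{n²}` when `T Y + Y T = 0` and vanishes otherwise (the trace form is nondegenerate),
whence `|Σ|² ≤ p^{n²} · p^K`. The same nondegeneracy identifies the radical of `B` with that kernel.
-/

/-- The radical of the bilinear form `(U, Y) ↦ Tr (T * (U * Y + Y * U))` on matrices. -/
def radSubmodule (p n : ℕ) (T : Matrix (Fin n) (Fin n) (ZMod p)) :
    Submodule (ZMod p) (Matrix (Fin n) (Fin n) (ZMod p)) where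
  carrier := {Y | ∀ U, Matrix.trace (T * (U * Y + Y * U)) = 0}
  zero_mem' := by intro U; simp
  add_mem' := by
    intro a b ha hb U
    have h1 := ha U
    have h2 := hb U
    simp only [mul_add, add_mul, Matrix.trace_add] at h1 h2 ⊢
    linear_combination h1 + h2
  smul_mem' := by
    intro c a ha U
    have h1 := ha U
    simp only [mul_add, add_mul, Matrix.trace_add, Matrix.mul_smul, Matrix.smul_mul,
      Matrix.trace_smul, smul_eq_mul] at h1 ⊢
    linear_combination c * h1

open Finset Function ComplexConjugate

section WeylDifferencing

variable {G R : Type*} [AddCommGroup G] [Fintype G] [AddCommGroup R] [Finite R]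

theorem sum_addChar_mul_conj_eq (ψ : AddChar R ℂ) (f : G → R) (B : G → G →+ R)
    (hf : ∀ V Y, f (V + Y) = f V + f Y + B Y V) :
    (∑ U, ψ (f U)) * conj (∑ U, ψ (f U)) = ∑ Y, ψ (f Y) * ∑ V, ψ (B Y V) := by
  calc (∑ U, ψ (f U)) * conj (∑ U, ψ (f U))
      = ∑ V, ∑ Y, ψ (f (V + Y) - f V) := by
        rw [map_sum, sum_mul_sum, sum_comm]
        refine sum_congr rfl fun V _ => (Fintype.sum_equiv (Equiv.addLeft V) _ _ fun Y => ?_).symm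
        simp [sub_eq_add_neg, AddChar.map_add_eq_mul, AddChar.map_neg_eq_conj]
    _ = ∑ Y, ψ (f Y) * ∑ V, ψ (B Y V) := by
        simp_rw [hf, add_assoc, add_sub_cancel_left, AddChar.map_add_eq_mul, mul_sum]
        exact sum_comm

theorem norm_sum_addChar_sq_le (ψ : AddChar R ℂ) (hψ : Injective ψ) (f : G → R)
    (B : G → G →+ R) (hf : ∀ V Y, f (V + Y) = f V + f Y + B Y V) :
    ‖∑ U, ψ (f U)‖ ^ 2 ≤ Fintype.card G * Nat.card {Y // B Y = 0} := by
  classical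
  have orthogonality (Y : G) :
      ‖∑ V, ψ (B Y V)‖ = if B Y = 0 then (Fintype.card G : ℝ) else 0 := by
    have hcomp : ψ.compAddMonoidHom (B Y) = 0 ↔ B Y = 0 := by
      rw [AddChar.eq_zero_iff, DFunLike.ext_iff]
      refine forall_congr' fun V => ?_
      rw [AddChar.compAddMonoidHom_apply, ← ψ.map_zero_eq_one, hψ.eq_iff, AddMonoidHom.zero_apply]
    have := (ψ.compAddMonoidHom (B Y)).sum_eq_ite
    simp only [AddChar.compAddMonoidHom_apply, hcomp] at this
    rw [this]
    split_ifs <;> simp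
  calc ‖∑ U, ψ (f U)‖ ^ 2 = ‖(∑ U, ψ (f U)) * conj (∑ U, ψ (f U))‖ := by
        rw [norm_mul, RCLike.norm_conj, sq]
    _ = ‖∑ Y, ψ (f Y) * ∑ V, ψ (B Y V)‖ := by rw [sum_addChar_mul_conj_eq ψ f B hf]
    _ ≤ ∑ Y, ‖∑ V, ψ (B Y V)‖ :=
        norm_sum_le_of_le _ fun Y _ => by rw [norm_mul, ψ.norm_apply, one_mul]
    _ = Fintype.card G * Nat.card {Y // B Y = 0} := by
        simp only [orthogonality, sum_ite, sum_const_zero, add_zero, sum_const, nsmul_eq_mul,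
          Nat.card_eq_fintype_card, Fintype.card_subtype, mul_comm]

end WeylDifferencing

namespace Matrix

variable {n R : Type*} [Fintype n] [CommRing R]

theorem forall_trace_mul_eq_zero_iff (A : Matrix n n R) : (∀ U, trace (A * U) = 0) ↔ A = 0 := by
  rw [ext_iff_trace_mul_right]
  simp only [Matrix.zero_mul, trace_zero]

theorem trace_mul_mul_add_mul (T U Y : Matrix n n R) :
    trace (T * (U * Y + Y * U)) = trace ((T * Y + Y * T) * U) := by
  simp only [Matrix.mul_add, Matrix.add_mul, trace_add, ← Matrix.mul_assoc]
  rw [trace_mul_cycle T U Y]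
  ring

theorem trace_linear_add_quadratic_add (S T V Y : Matrix n n R) :
    trace (S * (V + Y) + T * ((V + Y) * (V + Y))) =
      trace (S * V + T * (V * V)) + trace (S * Y + T * (Y * Y)) + trace ((T * Y + Y * T) * V) := by
  rw [← trace_mul_mul_add_mul]
  simp only [Matrix.mul_add, Matrix.add_mul, trace_add]
  ring

end Matrix

theorem radSubmodule_eq_ker (p n : ℕ) (T : Matrix (Fin n) (Fin n) (ZMod p)) :
    radSubmodule p n T =
      LinearMap.ker (LinearMap.mulLeft (ZMod p) T + LinearMap.mulRight (ZMod p) T) := by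
  ext Y
  change (∀ U, _) ↔ T * Y + Y * T = 0
  simp only [Matrix.trace_mul_mul_add_mul, Matrix.forall_trace_mul_eq_zero_iff]

theorem sqrt_pow_mul_pow_eq {b : ℝ} (hb : 0 < b) (m k : ℕ) :
    √(b ^ m * b ^ k) = b ^ m * b ^ (-(((m : ℝ) - k) / 2)) := by
  rw [← pow_add, Real.sqrt_eq_rpow, ← Real.rpow_natCast, ← Real.rpow_mul hb.le,
    ← Real.rpow_natCast b m, ← Real.rpow_add hb]
  congr 1
  push_cast
  ring

theorem stmt_19_general (p n : ℕ) [Fact p.Prime]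
    (T : Matrix (Fin n) (Fin n) (ZMod p)) :
    Module.finrank (ZMod p) (radSubmodule p n T)
      = Module.finrank (ZMod p)
          (LinearMap.ker (LinearMap.mulLeft (ZMod p) T + LinearMap.mulRight (ZMod p) T)) ∧
    ∀ S : Matrix (Fin n) (Fin n) (ZMod p),
      ‖(∑ U : Matrix (Fin n) (Fin n) (ZMod p),
        Complex.exp (2 * Real.pi * Complex.I *
          ((Matrix.trace (S * U + T * (U * U))).val : ℂ) / p))‖
      ≤ (p : ℝ) ^ (n ^ 2) *
          (p : ℝ) ^ (-(((n ^ 2 : ℝ) -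
            (Module.finrank (ZMod p)
              (LinearMap.ker (LinearMap.mulLeft (ZMod p) T + LinearMap.mulRight (ZMod p) T)) : ℝ)) / 2)) := by
  set L := LinearMap.mulLeft (ZMod p) T + LinearMap.mulRight (ZMod p) T
  refine ⟨by rw [radSubmodule_eq_ker], fun S => ?_⟩
  let polar (Y : Matrix (Fin n) (Fin n) (ZMod p)) :=
    (Matrix.traceAddMonoidHom (Fin n) (ZMod p)).comp (AddMonoidHom.mulLeft (T * Y + Y * T))
  have hpolar : Nat.card {Y // polar Y = 0} = Nat.card (LinearMap.ker L) :=
    Nat.card_congr <| Equiv.subtypeEquivRight fun Y => by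
      rw [DFunLike.ext_iff]
      exact Matrix.forall_trace_mul_eq_zero_iff _
  have hbound := norm_sum_addChar_sq_le ZMod.stdAddChar ZMod.injective_stdAddChar
    (fun U => Matrix.trace (S * U + T * (U * U))) polar
    fun V Y => Matrix.trace_linear_add_quadratic_add S T V Y
  rw [hpolar, Module.natCard_eq_pow_finrank (K := ZMod p), Nat.card_zmod,
    Module.card_eq_pow_finrank (K := ZMod p), ZMod.card, Module.finrank_matrix, Fintype.card_fin,
    Module.finrank_self, mul_one, ← sq] at hbound
  simp only [ZMod.stdAddChar_apply, ZMod.toCircle_apply] at hbound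
  have hp : (0 : ℝ) < p := by exact_mod_cast (Fact.out : p.Prime).pos
  rw [← Nat.cast_pow (α := ℝ) n 2, ← sqrt_pow_mul_pow_eq hp,
    Real.le_sqrt (norm_nonneg _) (by positivity)]
  push_cast at hbound ⊢
  exact hbound

theorem stmt_19 (p n : ℕ) [Fact p.Prime] (hp2 : p ≠ 2)
    (T : Matrix (Fin n) (Fin n) (ZMod p)) :
    Module.finrank (ZMod p) (radSubmodule p n T)
      = Module.finrank (ZMod p)
          (LinearMap.ker (LinearMap.mulLeft (ZMod p) T + LinearMap.mulRight (ZMod p) T)) ∧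
    ∀ S : Matrix (Fin n) (Fin n) (ZMod p),
      ‖(∑ U : Matrix (Fin n) (Fin n) (ZMod p),
        Complex.exp (2 * Real.pi * Complex.I *
          ((Matrix.trace (S * U + T * (U * U))).val : ℂ) / p))‖
      ≤ (p : ℝ) ^ (n ^ 2) *
          (p : ℝ) ^ (-(((n ^ 2 : ℝ) -
            (Module.finrank (ZMod p)
              (LinearMap.ker (LinearMap.mulLeft (ZMod p) T + LinearMap.mulRight (ZMod p) T)) : ℝ)) / 2)) :=
  stmt_19_general p n T
end
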